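/- arXiv:1408.5252 — 2 statements merged into one kernel-verified Lean document; each statement's English description precedes it below -/
import Mathlib

section
/- Let R be a field and let I be a nonzero R[X,X⁻¹]-submodule of the field R(X) that is finitely generated and contains 1. Then there exists a unique polynomial P ∈ R[X] with P(0) = 1 such that I = (1/P)·R[X,X⁻¹]. -/
/-!
Clearing the denominators of a finite generating set by their product `D` puts `I` inside
`D⁻¹·R[X,X⁻¹]`. The numerators `{f ∈ R[X] | f/D ∈ I}` form an ideal of the principal ideal
domain `R[X]`; it contains `D`, so its generator `g` divides `D = g·E`, and `I = (g/D)·R[X,X⁻¹]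
= E⁻¹·R[X,X⁻¹]`. The units `c·Xᵗ` of `R[X,X⁻¹]` may be removed from `E`, leaving `P` with
`P(0) = 1`. Two such `P, Q` generating the same module satisfy `Q = f·Xᵏ·P`; as `P` is coprime
to `X`, this gives `P ∣ Q`, and symmetrically `Q ∣ P`, so `P = Q`.
-/

open Polynomial

section

variable {R : Type*} [Field R]

theorem Polynomial.exists_eq_C_mul_X_pow_mul_of_ne_zero {E : R[X]} (hE : E ≠ 0) :
    ∃ c ≠ 0, ∃ (t : ℕ) (P : R[X]), P.coeff 0 = 1 ∧ E = C c * X ^ t * P := by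
  obtain ⟨q, hEq, hq⟩ := exists_eq_pow_rootMultiplicity_mul_and_not_dvd E hE 0
  have hq0 : q.coeff 0 ≠ 0 := fun h => hq (by simpa using X_dvd_iff.2 h)
  refine ⟨q.coeff 0, hq0, rootMultiplicity 0 E, C (q.coeff 0)⁻¹ * q, ?_, ?_⟩
  · rw [coeff_C_mul, inv_mul_cancel₀ hq0]
  · have hunit : C (q.coeff 0) * C (q.coeff 0)⁻¹ = 1 := by
      rw [← C_mul, mul_inv_cancel₀ hq0, C_1]
    rw [C_0, sub_zero] at hEq
    linear_combination hEq - X ^ rootMultiplicity 0 E * q * hunit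

theorem Polynomial.eq_of_dvd_of_dvd_of_coeff_zero_eq_one {S : Type*} [CommRing S] [IsDomain S]
    {P Q : S[X]} (hPQ : P ∣ Q)
    (hQP : Q ∣ P) (hP : P.coeff 0 = 1) (hQ : Q.coeff 0 = 1) : P = Q := by
  obtain ⟨u, hu⟩ := associated_of_dvd_dvd hPQ hQP
  obtain ⟨r, -, hr⟩ := Polynomial.isUnit_iff.1 u.isUnit
  have hr1 : r = 1 := by
    simpa [← hu, ← hr, coeff_mul_C, hP] using hQ
  rw [← hu, ← hr, hr1, C_1, mul_one]

theorem Polynomial.not_X_dvd_of_coeff_zero_eq_one {S : Type*} [Semiring S] [Nontrivial S]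
    {P : S[X]} (hP : P.coeff 0 = 1) : ¬ X ∣ P := by
  simp [X_dvd_iff, hP]

theorem X_zpow_eq_algebraMap_X_pow_mul {k n : ℤ} (h : n ≤ k) :
    (RatFunc.X : RatFunc R) ^ k =
      algebraMap R[X] (RatFunc R) (X ^ (k - n).toNat) * RatFunc.X ^ n := by
  rw [map_pow, RatFunc.algebraMap_X, ← zpow_natCast, Int.toNat_of_nonneg (sub_nonneg.2 h),
    ← zpow_add₀ RatFunc.X_ne_zero, sub_add_cancel]

/-- `R[X,X⁻¹]·w`, bundled as an `R[X]`-submodule. -/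
def laurentSpan (w : RatFunc R) : Submodule R[X] (RatFunc R) where
  carrier := {y | ∃ (f : R[X]) (k : ℤ), y = algebraMap R[X] (RatFunc R) f * RatFunc.X ^ k * w}
  zero_mem' := ⟨0, 0, by simp⟩
  add_mem' := by
    rintro _ _ ⟨f, k, rfl⟩ ⟨g, m, rfl⟩
    refine ⟨f * X ^ (k - min k m).toNat + g * X ^ (m - min k m).toNat, min k m, ?_⟩
    rw [X_zpow_eq_algebraMap_X_pow_mul (min_le_left k m),
      X_zpow_eq_algebraMap_X_pow_mul (min_le_right k m)]
    simp only [map_add, map_mul]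
    ring
  smul_mem' := by
    rintro c _ ⟨f, k, rfl⟩
    exact ⟨c * f, k, by rw [Algebra.smul_def, map_mul]; ring⟩

theorem self_mem_laurentSpan (w : RatFunc R) : w ∈ laurentSpan w :=
  ⟨1, 0, by simp⟩

theorem laurent_mul_mem_laurentSpan {w y : RatFunc R} (f : R[X]) (k : ℤ)
    (hy : y ∈ laurentSpan w) :
    algebraMap R[X] (RatFunc R) f * RatFunc.X ^ k * y ∈ laurentSpan w := by
  obtain ⟨g, m, rfl⟩ := hy
  exact ⟨f * g, k + m, by rw [map_mul, zpow_add₀ RatFunc.X_ne_zero]; ring⟩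

theorem laurentSpan_le_of_mem {w w' : RatFunc R} (h : w' ∈ laurentSpan w) :
    laurentSpan w' ≤ laurentSpan w := by
  rintro _ ⟨f, k, rfl⟩
  exact laurent_mul_mem_laurentSpan f k h

theorem laurentSpan_subset {I : Set (RatFunc R)}
    (hsmul : ∀ (f : R[X]) (k : ℤ), ∀ x ∈ I,
      algebraMap R[X] (RatFunc R) f * RatFunc.X ^ k * x ∈ I)
    {w : RatFunc R} (hw : w ∈ I) : (laurentSpan w : Set (RatFunc R)) ⊆ I := by
  rintro _ ⟨f, k, rfl⟩
  exact hsmul f k w hw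

theorem laurentSpan_inv_le_of_dvd {a b : R[X]} (hb : b ≠ 0) (hab : a ∣ b) :
    laurentSpan (algebraMap R[X] (RatFunc R) a)⁻¹ ≤
      laurentSpan (algebraMap R[X] (RatFunc R) b)⁻¹ := by
  obtain ⟨c, rfl⟩ := hab
  refine laurentSpan_le_of_mem ⟨c, 0, ?_⟩
  have hc : algebraMap R[X] (RatFunc R) c ≠ 0 := by
    simpa using right_ne_zero_of_mul hb
  rw [map_mul, zpow_zero, mul_one, mul_inv, mul_left_comm, mul_inv_cancel₀ hc, mul_one]

theorem mem_laurentSpan_inv_denom (x : RatFunc R) :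
    x ∈ laurentSpan (algebraMap R[X] (RatFunc R) x.denom)⁻¹ :=
  ⟨x.num, 0, by rw [zpow_zero, mul_one, ← div_eq_mul_inv, RatFunc.num_div_denom]⟩

theorem laurentSpan_inv_C_mul_X_pow_mul {c : R} (hc : c ≠ 0) (t : ℕ) (P : R[X]) :
    laurentSpan (algebraMap R[X] (RatFunc R) (C c * X ^ t * P))⁻¹ =
      laurentSpan (algebraMap R[X] (RatFunc R) P)⁻¹ := by
  have hu : algebraMap R[X] (RatFunc R) (C c * X ^ t) ≠ 0 := by simp [hc, RatFunc.X_ne_zero]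
  refine le_antisymm (laurentSpan_le_of_mem ⟨C c⁻¹, -t, ?_⟩)
    (laurentSpan_le_of_mem ⟨C c * X ^ t, 0, ?_⟩)
  · simp only [map_mul, map_pow, map_inv₀, RatFunc.algebraMap_C, RatFunc.algebraMap_X, mul_inv,
      zpow_neg, zpow_natCast]
  · rw [zpow_zero, mul_one, map_mul _ (C c * X ^ t), mul_inv, ← mul_assoc, mul_inv_cancel₀ hu,
      one_mul]

theorem exists_eq_laurentSpan_inv {I : Set (RatFunc R)} (hone : (1 : RatFunc R) ∈ I)
    (hadd : ∀ x ∈ I, ∀ y ∈ I, x + y ∈ I)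
    (hsmul : ∀ (f : R[X]) (k : ℤ), ∀ x ∈ I,
      algebraMap R[X] (RatFunc R) f * RatFunc.X ^ k * x ∈ I)
    {D : R[X]} (hD : D ≠ 0) (hID : I ⊆ laurentSpan (algebraMap R[X] (RatFunc R) D)⁻¹) :
    ∃ E : R[X], E ≠ 0 ∧ I = laurentSpan (algebraMap R[X] (RatFunc R) E)⁻¹ := by
  let J : Ideal R[X] :=
    { carrier := {f | algebraMap R[X] (RatFunc R) f / algebraMap R[X] (RatFunc R) D ∈ I}
      zero_mem' := by simpa using hsmul 0 0 1 hone
      add_mem' := fun hf hg => show _ ∈ I by rw [map_add, add_div]; exact hadd _ hf _ hg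
      smul_mem' := fun c f hf => show _ ∈ I by
        simpa only [smul_eq_mul, map_mul, zpow_zero, mul_one, mul_div_assoc]
          using hsmul c 0 _ hf }
  set g := Submodule.IsPrincipal.generator J
  have hmem : ∀ f, f ∈ J ↔ g ∣ f := fun _ => Submodule.IsPrincipal.mem_iff_generator_dvd J
  obtain ⟨E, hDE⟩ := (hmem D).1 (show _ ∈ I by simpa [div_self, hD] using hone)
  have hg : g ≠ 0 := left_ne_zero_of_mul (hDE ▸ hD)
  have hE : E ≠ 0 := right_ne_zero_of_mul (hDE ▸ hD)
  have hgD : algebraMap R[X] (RatFunc R) g / algebraMap R[X] (RatFunc R) D =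
      (algebraMap R[X] (RatFunc R) E)⁻¹ := by
    rw [hDE, map_mul, div_mul_cancel_left₀ (by simpa using hg)]
  refine ⟨E, hE, subset_antisymm (fun y hy => ?_) ?_⟩
  · obtain ⟨f, k, rfl⟩ := hID hy
    have hfJ : f ∈ J := show _ ∈ I by
      convert hsmul 1 (-k) _ hy using 1
      have hXk : (RatFunc.X : RatFunc R) ^ (-k) * RatFunc.X ^ k = 1 := by
        rw [← zpow_add₀ RatFunc.X_ne_zero, neg_add_cancel, zpow_zero]
      rw [map_one, one_mul, div_eq_mul_inv]
      linear_combination -(algebraMap R[X] (RatFunc R) f * (algebraMap R[X] (RatFunc R) D)⁻¹) * hXk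
    obtain ⟨h, rfl⟩ := (hmem f).1 hfJ
    exact ⟨h, k, by rw [← hgD, map_mul]; ring⟩
  · rw [← hgD]
    exact laurentSpan_subset hsmul (Submodule.IsPrincipal.generator_mem J)

theorem exists_coeff_zero_eq_one_laurentSpan_inv_eq {E : R[X]} (hE : E ≠ 0) :
    ∃ P : R[X], P.coeff 0 = 1 ∧ laurentSpan (algebraMap R[X] (RatFunc R) E)⁻¹ =
      laurentSpan (algebraMap R[X] (RatFunc R) P)⁻¹ := by
  obtain ⟨c, hc, t, P, hP, rfl⟩ := exists_eq_C_mul_X_pow_mul_of_ne_zero hE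
  exact ⟨P, hP, laurentSpan_inv_C_mul_X_pow_mul hc t P⟩

theorem dvd_of_algebraMap_eq_mul_X_zpow_mul {P Q f : R[X]} {k : ℤ} (hP : ¬ X ∣ P)
    (h : algebraMap R[X] (RatFunc R) Q =
      algebraMap R[X] (RatFunc R) f * RatFunc.X ^ k * algebraMap R[X] (RatFunc R) P) :
    P ∣ Q := by
  have hk := X_zpow_eq_algebraMap_X_pow_mul (R := R) (min_le_left k 0)
  have h0 := X_zpow_eq_algebraMap_X_pow_mul (R := R) (min_le_right k 0)
  -- multiplying `h` by `X ^ (-min k 0)` turns it into an identity in `R[X]`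
  have hpoly : Q * X ^ (0 - min k 0).toNat = f * X ^ (k - min k 0).toNat * P := by
    apply RatFunc.algebraMap_injective R
    apply mul_right_cancel₀ (zpow_ne_zero (min k 0) (RatFunc.X_ne_zero (K := R)))
    rw [zpow_zero] at h0
    simp only [map_mul]
    linear_combination h - algebraMap R[X] (RatFunc R) Q * h0 +
      algebraMap R[X] (RatFunc R) f * algebraMap R[X] (RatFunc R) P * hk
  have hcop : IsCoprime P (X ^ (0 - min k 0).toNat) :=
    ((irreducible_X.coprime_iff_not_dvd.2 hP).symm).pow_right
  exact hcop.dvd_of_dvd_mul_right ⟨f * X ^ (k - min k 0).toNat, by rw [hpoly]; ring⟩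

theorem dvd_of_inv_mem_laurentSpan_inv {P Q : R[X]} (hP : ¬ X ∣ P) (hQ : Q ≠ 0)
    (h : (algebraMap R[X] (RatFunc R) P)⁻¹ ∈ laurentSpan (algebraMap R[X] (RatFunc R) Q)⁻¹) :
    P ∣ Q := by
  obtain ⟨f, k, hfk⟩ := h
  have hP0 : algebraMap R[X] (RatFunc R) P ≠ 0 := by
    simpa using fun h : P = 0 => hP (h ▸ dvd_zero X)
  have hQ0 : algebraMap R[X] (RatFunc R) Q ≠ 0 := by simpa using hQ
  refine dvd_of_algebraMap_eq_mul_X_zpow_mul hP (k := k) (f := f) ?_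
  field_simp at hfk
  linear_combination hfk

theorem eq_of_laurentSpan_inv_eq {P Q : R[X]} (hP : P.coeff 0 = 1) (hQ : Q.coeff 0 = 1)
    (h : laurentSpan (algebraMap R[X] (RatFunc R) P)⁻¹ =
      laurentSpan (algebraMap R[X] (RatFunc R) Q)⁻¹) : P = Q := by
  have hP0 : P ≠ 0 := fun h0 => by simp [h0] at hP
  have hQ0 : Q ≠ 0 := fun h0 => by simp [h0] at hQ
  refine eq_of_dvd_of_dvd_of_coeff_zero_eq_one ?_ ?_ hP hQ
  · exact dvd_of_inv_mem_laurentSpan_inv (not_X_dvd_of_coeff_zero_eq_one hP) hQ0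
      (h ▸ self_mem_laurentSpan _)
  · exact dvd_of_inv_mem_laurentSpan_inv (not_X_dvd_of_coeff_zero_eq_one hQ) hP0
      (h.symm ▸ self_mem_laurentSpan _)

theorem coe_laurentSpan_inv (P : R[X]) :
    (laurentSpan (algebraMap R[X] (RatFunc R) P)⁻¹ : Set (RatFunc R)) =
      {y | ∃ (f : R[X]) (k : ℤ), y = algebraMap R[X] (RatFunc R) f * RatFunc.X ^ k /
        algebraMap R[X] (RatFunc R) P} := by
  simp only [div_eq_mul_inv]
  rfl

end

/-- A nonzero finitely generated `R[X,X⁻¹]`-submodule `I` of `R(X)` containing `1`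
(a fractional ideal of the Laurent polynomial ring) has a unique generator of the form
`1/P` with `P ∈ R[X]` and `P(0) = 1` (an Euler factor). Here elements of `R[X,X⁻¹]`
inside `R(X)` are written as `f·Xᵏ` with `f ∈ R[X]` and `k ∈ ℤ`. -/
theorem fractional_ideal_euler_factor {R : Type*} [Field R] (I : Set (RatFunc R))
    (hone : (1 : RatFunc R) ∈ I)
    (hadd : ∀ x ∈ I, ∀ y ∈ I, x + y ∈ I)
    (hsmul : ∀ (f : Polynomial R) (k : ℤ), ∀ x ∈ I,
      algebraMap (Polynomial R) (RatFunc R) f * RatFunc.X ^ k * x ∈ I)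
    (hfg : ∃ S : Finset (RatFunc R), ∀ y, y ∈ I ↔
      ∃ (cf : RatFunc R → Polynomial R) (ck : RatFunc R → ℤ),
        y = ∑ s ∈ S, algebraMap (Polynomial R) (RatFunc R) (cf s) * RatFunc.X ^ (ck s) * s) :
    ∃! P : Polynomial R, P.coeff 0 = 1 ∧
      I = {y | ∃ (f : Polynomial R) (k : ℤ),
        y = algebraMap (Polynomial R) (RatFunc R) f * RatFunc.X ^ k /
              algebraMap (Polynomial R) (RatFunc R) P} := by
  obtain ⟨S, hS⟩ := hfg
  have hD : ∏ s ∈ S, s.denom ≠ 0 := Finset.prod_ne_zero_iff.2 fun s _ => s.denom_ne_zero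
  have hID : I ⊆ laurentSpan (algebraMap R[X] (RatFunc R) (∏ s ∈ S, s.denom))⁻¹ := by
    intro y hy
    obtain ⟨cf, ck, rfl⟩ := (hS y).1 hy
    exact Submodule.sum_mem _ fun s hs => laurent_mul_mem_laurentSpan _ _
      (laurentSpan_inv_le_of_dvd hD (Finset.dvd_prod_of_mem _ hs) (mem_laurentSpan_inv_denom s))
  obtain ⟨E, hE, hIE⟩ := exists_eq_laurentSpan_inv hone hadd hsmul hD hID
  obtain ⟨P, hP, hEP⟩ := exists_coeff_zero_eq_one_laurentSpan_inv_eq hE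
  refine ⟨P, ⟨hP, by rw [← coe_laurentSpan_inv, hIE, hEP]⟩, fun Q ⟨hQ, hQI⟩ => ?_⟩
  refine eq_of_laurentSpan_inv_eq hQ hP (SetLike.coe_injective ?_)
  rw [coe_laurentSpan_inv, ← hQI, hIE, hEP]
end

section
/- Let e ≥ 2 be an integer and consider 'arcs' in ℤ/eℤ, i.e. nonempty sets of the form A(a,L) = {a, a+1, …, a+L−1} (mod e) with 1 ≤ L ≤ e−1. Suppose a finite family of such arcs (A_i) satisfies: for every pair i ≠ j, either one arc is contained in the other, or the arcs are disjoint and non-juxtaposed (meaning the successor of the last element of A_i is not the first element of A_j and vice versa). Then the union of the arcs cannot be all of ℤ/eℤ. -/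
/-- The arc `{a, a+1, …, a+L−1}` in `ℤ/eℤ`. -/
def arcSet (e : ℕ) (a : ZMod e) (L : ℕ) : Set (ZMod e) :=
  (fun j : ℕ => a + (j : ZMod e)) '' Set.Iio L

/-!
Take an arc `A` of the family that is maximal for inclusion. Since `A` is proper, the successor `x`
of its last element lies outside `A`, but `x` is covered by some other arc `B`. `B` cannot contain
`A` (maximality) nor be contained in it (`x ∉ A`), so `A` and `B` are disjoint and not juxtaposed.
Then `x` is not the first element of `B`, so its predecessor, the last element of `A`, lies in `B`
too, contradicting disjointness.
-/

section Arc

variable {e : ℕ}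

lemma add_length_notMem_arcSet (a : ZMod e) {L : ℕ} (hL : L < e) :
    a + (L : ZMod e) ∉ arcSet e a L := by
  rintro ⟨k, hk, hkL⟩
  have hmod : k % e = L % e :=
    (ZMod.natCast_eq_natCast_iff _ _ _).mp (add_left_cancel hkL)
  rw [Nat.mod_eq_of_lt (lt_trans hk hL), Nat.mod_eq_of_lt hL] at hmod
  exact (Set.mem_Iio.mp hk).ne hmod

lemma add_length_sub_one_mem_arcSet (a : ZMod e) {L : ℕ} (hL : 1 ≤ L) :
    a + (L : ZMod e) - 1 ∈ arcSet e a L :=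
  ⟨L - 1, Set.mem_Iio.mpr (by omega), by push_cast [Nat.cast_sub hL]; ring⟩

lemma sub_one_mem_arcSet_of_ne {a x : ZMod e} {L : ℕ} (hx : x ∈ arcSet e a L) (hxa : x ≠ a) :
    x - 1 ∈ arcSet e a L := by
  obtain ⟨k, hk, rfl⟩ := hx
  obtain _ | k := k
  · simp at hxa
  · exact ⟨k, Set.mem_Iio.mpr (by simp at hk; omega), by push_cast; ring⟩

end Arc

theorem arcs_not_cover_general (e : ℕ) {ι : Type*} [Finite ι]
    (a : ι → ZMod e) (L : ι → ℕ) (hL : ∀ i, 1 ≤ L i ∧ L i ≤ e - 1)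
    (hpair : ∀ i j, i ≠ j →
      arcSet e (a i) (L i) ⊆ arcSet e (a j) (L j) ∨
      arcSet e (a j) (L j) ⊆ arcSet e (a i) (L i) ∨
      (Disjoint (arcSet e (a i) (L i)) (arcSet e (a j) (L j)) ∧
        a i + (L i : ZMod e) ≠ a j ∧ a j + (L j : ZMod e) ≠ a i)) :
    (⋃ i, arcSet e (a i) (L i)) ≠ Set.univ := by
  intro hcover
  have hmem (x : ZMod e) : ∃ j, x ∈ arcSet e (a j) (L j) :=
    Set.mem_iUnion.mp (hcover ▸ Set.mem_univ x)
  have : Nonempty ι := ⟨(hmem 0).choose⟩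
  obtain ⟨i, -, hmax⟩ := Set.finite_univ.exists_maximalFor
    (fun i => arcSet e (a i) (L i)) Set.univ Set.univ_nonempty
  have hout := add_length_notMem_arcSet (a i) (show L i < e by have := hL i; omega)
  obtain ⟨j, hj⟩ := hmem (a i + L i)
  have hij : i ≠ j := by rintro rfl; exact hout hj
  rcases hpair i j hij with hsub | hsub | ⟨hdisj, hnotFirst, -⟩
  · exact hout (hmax trivial hsub hj)
  · exact hout (hsub hj)
  · exact Set.disjoint_left.mp hdisj (add_length_sub_one_mem_arcSet (a i) (hL i).1)
      (sub_one_mem_arcSet_of_ne hj hnotFirst)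

/-- Let `e ≥ 2`. A finite family of arcs in `ℤ/eℤ`, each of length between `1` and `e−1`,
such that any two distinct arcs are either nested, or disjoint and non-juxtaposed,
cannot cover all of `ℤ/eℤ`. -/
theorem arcs_not_cover (e : ℕ) (he : 2 ≤ e) {ι : Type*} [Finite ι]
    (a : ι → ZMod e) (L : ι → ℕ) (hL : ∀ i, 1 ≤ L i ∧ L i ≤ e - 1)
    (hpair : ∀ i j, i ≠ j →
      arcSet e (a i) (L i) ⊆ arcSet e (a j) (L j) ∨
      arcSet e (a j) (L j) ⊆ arcSet e (a i) (L i) ∨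
      (Disjoint (arcSet e (a i) (L i)) (arcSet e (a j) (L j)) ∧
        a i + (L i : ZMod e) ≠ a j ∧ a j + (L j : ZMod e) ≠ a i)) :
    (⋃ i, arcSet e (a i) (L i)) ≠ Set.univ :=
  arcs_not_cover_general e a L hL hpair
end
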